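/- arXiv:0705.1521 — 2 statements merged into one kernel-verified Lean document; each statement's English description precedes it below -/
import Mathlib

section
/- Every (C₄, P₄)-free graph (i.e. every trivially perfect graph) is module-composed. -/
open scoped Classical

/-- `M` is a module (homogeneous set) of `G`: every two vertices of `M`
have the same neighbours outside `M`. -/
def SimpleGraph.IsModule {V : Type*} (G : SimpleGraph V) (M : Set V) : Prop :=
  ∀ v₁ ∈ M, ∀ v₂ ∈ M, ∀ w ∉ M, (G.Adj v₁ w ↔ G.Adj v₂ w)

/-- `G` is module-composed: there is a linear ordering `v₀, …, v_{n-1}` of the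
vertices such that for every `i ≥ 1` the neighbourhood of `vᵢ` inside the
induced subgraph on `{v₀, …, v_{i-1}}` is a module of that induced subgraph. -/
def SimpleGraph.ModuleComposed {V : Type*} [Fintype V] (G : SimpleGraph V) : Prop :=
  ∃ e : Fin (Fintype.card V) ≃ V,
    ∀ i : Fin (Fintype.card V), 0 < (i : ℕ) →
      (G.induce {v | ∃ j, j < i ∧ e j = v}).IsModule
        {w : {v | ∃ j, j < i ∧ e j = v} | G.Adj (e i) ↑w}

/-!
Induct on the number of vertices and put a vertex `v` of maximum degree last. If `v ~ x ~ y`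
with `y ∉ N[v]`, then every other neighbour `z` of `v` is adjacent to `x` (otherwise
`z v x y` is an induced `P₄`, or `v x y z` an induced `C₄`), so `deg x > deg v`. Hence for `v`
of maximum degree there is no edge between `N(v)` and `V ∖ N[v]`, i.e. `N(v)` is a module
of `G - v`.
-/

namespace SimpleGraph

variable {V : Type*} {G : SimpleGraph V}

lemma cycleGraph_four_isIndContained {a b c d : V} (hab : G.Adj a b) (hbc : G.Adj b c)
    (hcd : G.Adj c d) (hda : G.Adj d a) (hac : ¬ G.Adj a c) (hbd : ¬ G.Adj b d)
    (hac' : a ≠ c) (hbd' : b ≠ d) : cycleGraph 4 ⊴ G := by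
  refine ⟨⟨⟨![a, b, c, d], fun i j hij => ?_⟩, fun {i j} => ?_⟩⟩
  · fin_cases i <;> fin_cases j <;>
      simp_all [hab.ne, hbc.ne, hcd.ne, hda.ne, hab.ne', hbc.ne', hcd.ne', hda.ne']
  · change G.Adj (![a, b, c, d] i) (![a, b, c, d] j) ↔ _
    fin_cases i <;> fin_cases j <;> simp [cycleGraph_adj, G.adj_comm, hda.symm, *] <;> decide

lemma pathGraph_four_isIndContained {a b c d : V} (hab : G.Adj a b) (hbc : G.Adj b c)
    (hcd : G.Adj c d) (hac : ¬ G.Adj a c) (had : ¬ G.Adj a d) (hbd : ¬ G.Adj b d)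
    (hac' : a ≠ c) (hbd' : b ≠ d) : pathGraph 4 ⊴ G := by
  have had' : a ≠ d := by rintro rfl; exact hac hcd.symm
  refine ⟨⟨⟨![a, b, c, d], fun i j hij => ?_⟩, fun {i j} => ?_⟩⟩
  · fin_cases i <;> fin_cases j <;> simp_all [hab.ne, hbc.ne, hcd.ne, hab.ne', hbc.ne', hcd.ne']
  · change G.Adj (![a, b, c, d] i) (![a, b, c, d] j) ↔ _
    fin_cases i <;> fin_cases j <;> simp [pathGraph_adj, G.adj_comm, *]

lemma adj_of_adj_of_adj_of_not_adj (hC4 : ¬ cycleGraph 4 ⊴ G) (hP4 : ¬ pathGraph 4 ⊴ G)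
    {v x y z : V} (hvx : G.Adj v x) (hxy : G.Adj x y) (hyv : y ≠ v) (hvy : ¬ G.Adj v y)
    (hvz : G.Adj v z) (hzx : z ≠ x) : G.Adj x z := by
  by_contra hxz
  by_cases hzy : G.Adj z y
  · exact hC4 (cycleGraph_four_isIndContained hvx hxy hzy.symm hvz.symm hvy hxz hyv.symm
      hzx.symm)
  · exact hP4 (pathGraph_four_isIndContained hvz.symm hvx hxy (fun h => hxz h.symm) hzy hvy
      hzx hyv.symm)

def NeighborSetIsModuleOn (G : SimpleGraph V) (u : V) (s : Set V) : Prop :=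
  ∀ a ∈ s, ∀ b ∈ s, ∀ c ∈ s, G.Adj u a → G.Adj u b → ¬ G.Adj u c → (G.Adj a c ↔ G.Adj b c)

lemma isModule_induce_iff_neighborSetIsModuleOn {u : V} {s : Set V} :
    (G.induce s).IsModule {w : s | G.Adj u w} ↔ G.NeighborSetIsModuleOn u s := by
  simp only [IsModule, NeighborSetIsModuleOn, Subtype.forall, Set.mem_ofPred_eq, comap_adj,
    Function.Embedding.subtype_apply]
  grind

lemma NeighborSetIsModuleOn.mono {u : V} {s t : Set V} (h : G.NeighborSetIsModuleOn u s)
    (hts : t ⊆ s) : G.NeighborSetIsModuleOn u t :=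
  fun a ha b hb c hc => h a (hts ha) b (hts hb) c (hts hc)

lemma neighborSetIsModuleOn_induce_iff {s : Set V} {u : s} {t : Set s} :
    (G.induce s).NeighborSetIsModuleOn u t ↔ G.NeighborSetIsModuleOn u (Subtype.val '' t) := by
  simp [NeighborSetIsModuleOn]

variable [Fintype V]

lemma degree_lt_degree_of_adj_of_adj_of_not_adj (hC4 : ¬ cycleGraph 4 ⊴ G)
    (hP4 : ¬ pathGraph 4 ⊴ G) {v x y : V} (hvx : G.Adj v x) (hxy : G.Adj x y) (hyv : y ≠ v)
    (hvy : ¬ G.Adj v y) : G.degree v < G.degree x := by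
  have hsub : insert v (insert y (G.neighborFinset v)) ⊆ insert x (G.neighborFinset x) := by
    intro z hz
    simp only [Finset.mem_insert, mem_neighborFinset] at hz ⊢
    rcases hz with rfl | rfl | hvz
    · exact .inr hvx.symm
    · exact .inr hxy
    · by_cases hzx : z = x
      · exact .inl hzx
      · exact .inr (adj_of_adj_of_adj_of_not_adj hC4 hP4 hvx hxy hyv hvy hvz hzx)
  have hcard := Finset.card_le_card hsub
  rw [Finset.card_insert_of_notMem (by simp [hyv.symm]),
    Finset.card_insert_of_notMem (by simpa using hvy), Finset.card_insert_of_notMem (by simp),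
    card_neighborFinset_eq_degree, card_neighborFinset_eq_degree] at hcard
  omega

lemma isModule_induce_compl_neighborSet (hC4 : ¬ cycleGraph 4 ⊴ G) (hP4 : ¬ pathGraph 4 ⊴ G)
    {v : V} (hv : ∀ x, G.Adj v x → G.degree x ≤ G.degree v) :
    (G.induce {v}ᶜ).IsModule {w | G.Adj v w} := by
  rintro a ha b hb c hc
  have hsep : ∀ x : ({v}ᶜ : Set V), G.Adj v x → ¬ G.Adj x c := fun x hx hxc =>
    (hv x hx).not_gt (degree_lt_degree_of_adj_of_adj_of_not_adj hC4 hP4 hx hxc c.2 hc)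
  exact iff_of_false (hsep a ha) (hsep b hb)

lemma moduleComposed_of_equiv {n : ℕ} (e : Fin n ≃ V)
    (h : ∀ i : Fin n, 0 < (i : ℕ) → G.NeighborSetIsModuleOn (e i) (e '' Set.Iio i)) :
    G.ModuleComposed := by
  obtain rfl : n = Fintype.card V := by simpa using Fintype.card_congr e
  exact ⟨e, fun i hi => isModule_induce_iff_neighborSetIsModuleOn.2 (h i hi)⟩

lemma ModuleComposed.of_induce_compl_singleton {v : V} (h : (G.induce {v}ᶜ).ModuleComposed)
    (hv : (G.induce {v}ᶜ).IsModule {w | G.Adj v w}) : G.ModuleComposed := by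
  obtain ⟨e', he'⟩ := h
  let e : Fin (Fintype.card ({v}ᶜ : Set V) + 1) ≃ V :=
    finSuccEquivLast.trans (e'.optionCongr.trans (Equiv.optionSubtypeNe v))
  have he_last : e (Fin.last _) = v :=
    congrArg (e'.optionCongr.trans (Equiv.optionSubtypeNe v)) finSuccEquivLast_last
  have he_castSucc (k) : e k.castSucc = e' k :=
    congrArg (e'.optionCongr.trans (Equiv.optionSubtypeNe v)) (finSuccEquivLast_castSucc k)
  refine moduleComposed_of_equiv e fun i hi => ?_
  induction i using Fin.lastCases with
  | last =>
    rw [he_last]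
    refine (isModule_induce_iff_neighborSetIsModuleOn.1 hv).mono ?_
    rintro _ ⟨j, hj, rfl⟩
    exact fun hjv => hj.ne (e.injective (hjv.trans he_last.symm))
  | cast k =>
    rw [he_castSucc]
    refine (neighborSetIsModuleOn_induce_iff.1
      (isModule_induce_iff_neighborSetIsModuleOn.1 (he' k hi))).mono ?_
    rintro _ ⟨j, hj, rfl⟩
    obtain ⟨j, rfl⟩ := Fin.exists_castSucc_eq.2 (hj.trans (Fin.castSucc_lt_last k)).ne
    exact ⟨e' j, ⟨j, Fin.castSucc_lt_castSucc_iff.1 hj, rfl⟩, (he_castSucc j).symm⟩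

theorem moduleComposed_of_cycleGraph_four_pathGraph_four_free (hC4 : ¬ cycleGraph 4 ⊴ G)
    (hP4 : ¬ pathGraph 4 ⊴ G) : G.ModuleComposed := by
  induction hn : Fintype.card V generalizing V with
  | zero =>
    have := Fintype.card_eq_zero_iff.1 hn
    exact moduleComposed_of_equiv (Equiv.equivOfIsEmpty (Fin 0) V) fun i => i.elim0
  | succ n ih =>
    have : Nonempty V := Fintype.card_pos_iff.1 (hn ▸ n.succ_pos)
    obtain ⟨v, hv⟩ := G.exists_maximal_degree_vertex
    have hind : G.induce {v}ᶜ ⊴ G := (Embedding.induce _).isIndContained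
    refine ModuleComposed.of_induce_compl_singleton
      (ih (fun h => hC4 (h.trans hind)) (fun h => hP4 (h.trans hind)) ?_)
      (isModule_induce_compl_neighborSet hC4 hP4 fun x _ => hv ▸ G.degree_le_maxDegree x)
    rw [Fintype.card_compl_set, hn, Fintype.card_unique, Nat.add_sub_cancel]

end SimpleGraph

/-- Every `(C₄, P₄)`-free graph (i.e. every trivially perfect graph) is
module-composed. -/
theorem trivially_perfect_moduleComposed {V : Type*} [Fintype V] (G : SimpleGraph V)
    (hC4 : ¬ ∃ _f : SimpleGraph.cycleGraph 4 ↪g G, True)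
    (hP4 : ¬ ∃ _f : SimpleGraph.pathGraph 4 ↪g G, True) :
    G.ModuleComposed :=
  SimpleGraph.moduleComposed_of_cycleGraph_four_pathGraph_four_free
    (fun ⟨f⟩ => hC4 ⟨f, trivial⟩) (fun ⟨f⟩ => hP4 ⟨f, trivial⟩)
end

section
/- Every independent module-composed graph is HHDG-free, i.e. contains no induced house, hole, domino, or gem. -/
open scoped Classical

/-- `G` is independent module-composed: there is a linear ordering of the
vertices such that for every `i ≥ 1`, the neighbourhood of `vᵢ` inside the
induced subgraph on `{v₀, …, v_{i-1}}` is a module of that induced subgraph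
which is moreover an independent set. -/
def SimpleGraph.IndepModuleComposed {V : Type*} [Fintype V] (G : SimpleGraph V) : Prop :=
  ∃ e : Fin (Fintype.card V) ≃ V,
    ∀ i : Fin (Fintype.card V), 0 < (i : ℕ) →
      (G.induce {v | ∃ j, j < i ∧ e j = v}).IsModule
        {w : {v | ∃ j, j < i ∧ e j = v} | G.Adj (e i) ↑w} ∧
      ∀ w₁ ∈ {w : {v | ∃ j, j < i ∧ e j = v} | G.Adj (e i) ↑w},
        ∀ w₂ ∈ {w : {v | ∃ j, j < i ∧ e j = v} | G.Adj (e i) ↑w},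
          ¬ (G.induce {v | ∃ j, j < i ∧ e j = v}).Adj w₁ w₂

/-- The house graph. -/
def house : SimpleGraph (Fin 5) :=
  SimpleGraph.fromRel (fun a b =>
    (a, b) ∈ [((0 : Fin 5), (1 : Fin 5)), (1, 2), (2, 3), (3, 4), (4, 0), (1, 4)])

/-- The domino graph. -/
def domino : SimpleGraph (Fin 6) :=
  SimpleGraph.fromRel (fun a b =>
    (a, b) ∈ [((0 : Fin 6), (1 : Fin 6)), (1, 2), (2, 3), (3, 4), (4, 5), (5, 0), (0, 3)])

/-- The gem graph: a path `0-1-2-3` together with a fifth vertex `4`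
adjacent to all four path vertices. -/
def gem : SimpleGraph (Fin 5) :=
  SimpleGraph.fromRel (fun a b =>
    (a, b) ∈ [((0 : Fin 5), (1 : Fin 5)), (1, 2), (2, 3),
              (4, 0), (4, 1), (4, 2), (4, 3)])

/-! In an independent module-composed ordering, take the last vertex `x` of an induced copy of
`H`: every other vertex of the copy precedes it, so the neighbourhood of `x` in `H` is an
independent set and a module of `H - x`. No house, hole, domino or gem has such a vertex. In a
hole the two neighbours `x - 1` and `x + 1` of `x` are told apart by `x + 2`; the three small
graphs are checked exhaustively. -/

namespace SimpleGraph

variable {V W : Type*}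

/-- The neighbourhood of `x` in `G[S]` is an independent set and a module of `G[S]`. -/
def NbhdIsIndepModuleOn (G : SimpleGraph V) (S : Set V) (x : V) : Prop :=
  ∀ u ∈ S, ∀ v ∈ S, G.Adj x u → G.Adj x v →
    ¬ G.Adj u v ∧ ∀ w ∈ S, ¬ G.Adj x w → (G.Adj u w ↔ G.Adj v w)

set_option synthInstance.maxSize 1000 in
instance [Fintype V] (G : SimpleGraph V) [DecidableRel G.Adj] (S : Set V)
    [DecidablePred (· ∈ S)] (x : V) : Decidable (G.NbhdIsIndepModuleOn S x) := by
  unfold NbhdIsIndepModuleOn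
  infer_instance

theorem IndepModuleComposed.exists_rank [Fintype V] {G : SimpleGraph V}
    (hG : G.IndepModuleComposed) :
    ∃ r : V → ℕ, r.Injective ∧ ∀ x, G.NbhdIsIndepModuleOn {u | r u < r x} x := by
  obtain ⟨e, he⟩ := hG
  refine ⟨fun v => e.symm v, Fin.val_injective.comp e.symm.injective,
    fun x u hu v hv hxu hxv => ?_⟩
  have mem : ∀ y, (e.symm y : ℕ) < e.symm x → y ∈ {v | ∃ j, j < e.symm x ∧ e j = v} :=
    fun y hy => ⟨e.symm y, hy, e.apply_symm_apply y⟩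
  obtain ⟨hmod, hindep⟩ := he (e.symm x) (Nat.zero_lt_of_lt hu)
  rw [e.apply_symm_apply] at hmod hindep
  exact ⟨hindep ⟨u, mem u hu⟩ hxu ⟨v, mem v hv⟩ hxv, fun w hw hxw =>
    hmod ⟨u, mem u hu⟩ hxu ⟨v, mem v hv⟩ hxv ⟨w, mem w hw⟩ hxw⟩

theorem NbhdIsIndepModuleOn.comap {G : SimpleGraph V} {H : SimpleGraph W} (f : H ↪g G)
    {S : Set V} {x : W} (h : G.NbhdIsIndepModuleOn S (f x)) :
    H.NbhdIsIndepModuleOn (f ⁻¹' S) x := by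
  intro u hu v hv hxu hxv
  obtain ⟨hind, hmod⟩ := h (f u) hu (f v) hv (f.map_adj_iff.2 hxu) (f.map_adj_iff.2 hxv)
  refine ⟨fun huv => hind (f.map_adj_iff.2 huv), fun w hw hxw => ?_⟩
  simpa only [f.map_adj_iff] using hmod (f w) hw (mt f.map_adj_iff.1 hxw)

theorem IndepModuleComposed.exists_nbhdIsIndepModuleOn_compl [Fintype V] {G : SimpleGraph V}
    (hG : G.IndepModuleComposed) [Finite W] [Nonempty W] {H : SimpleGraph W} (f : H ↪g G) :
    ∃ x, H.NbhdIsIndepModuleOn {x}ᶜ x := by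
  obtain ⟨r, hr, hrG⟩ := hG.exists_rank
  obtain ⟨x, hx⟩ := Finite.exists_max (r ∘ f)
  have hS : ({x}ᶜ : Set W) = f ⁻¹' {u | r u < r (f x)} := by
    ext u
    refine ⟨fun hux => lt_of_le_of_ne (hx u) fun h => hux (f.injective (hr h)), ?_⟩
    rintro h rfl
    exact lt_irrefl (r (f u)) h
  exact ⟨x, hS ▸ (hrG (f x)).comap f⟩

open Fin.CommRing in
theorem cycleGraph_not_nbhdIsIndepModuleOn_compl {n : ℕ} (hn : 5 ≤ n) (x : Fin n) :
    ¬ (cycleGraph n).NbhdIsIndepModuleOn {x}ᶜ x := by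
  obtain ⟨k, rfl⟩ : ∃ k, n = k + 2 := ⟨n - 2, by omega⟩
  have hne : ∀ c : ℕ, 0 < c → c < 5 → (c : Fin (k + 2)) ≠ 0 := fun c hc0 hc5 hc =>
    absurd (Nat.le_of_dvd hc0 (Fin.natCast_eq_zero.1 hc)) (by omega)
  have h2 : (2 : Fin (k + 2)) ≠ 0 := by exact_mod_cast hne 2 (by norm_num) (by norm_num)
  have h3 : (3 : Fin (k + 2)) ≠ 0 := by exact_mod_cast hne 3 (by norm_num) (by norm_num)
  have h4 : (4 : Fin (k + 2)) ≠ 0 := by exact_mod_cast hne 4 (by norm_num) (by norm_num)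
  have hx2 : x + 2 ≠ x := fun h => h2 (by linear_combination h)
  have hnadj : ¬ (cycleGraph (k + 2)).Adj x (x + 2) := by
    rw [cycleGraph_adj]
    rintro (h | h)
    · exact h3 (by linear_combination -h)
    · exact one_ne_zero (by linear_combination h)
  intro h
  have hmod := (h (x + 1) (by simp) (x - 1) (by simp)
    (cycleGraph_adj.2 (.inr (by ring))) (cycleGraph_adj.2 (.inl (by ring)))).2 (x + 2) hx2 hnadj
  rw [cycleGraph_adj, cycleGraph_adj] at hmod
  rcases hmod.1 (.inr (by ring)) with h | h
  · exact h4 (by linear_combination -h)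
  · exact h2 (by linear_combination h)

end SimpleGraph

instance : DecidableRel house.Adj := by unfold house; infer_instance

instance : DecidableRel domino.Adj := by unfold domino; infer_instance

instance : DecidableRel gem.Adj := by unfold gem; infer_instance

theorem house_not_nbhdIsIndepModuleOn_compl :
    ∀ x : Fin 5, ¬ house.NbhdIsIndepModuleOn {x}ᶜ x := by
  decide

theorem domino_not_nbhdIsIndepModuleOn_compl :
    ∀ x : Fin 6, ¬ domino.NbhdIsIndepModuleOn {x}ᶜ x := by
  decide

theorem gem_not_nbhdIsIndepModuleOn_compl :
    ∀ x : Fin 5, ¬ gem.NbhdIsIndepModuleOn {x}ᶜ x := by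
  decide

/-- Every independent module-composed graph is HHDG-free: it contains no
induced house, no induced hole, no induced domino, and no induced gem. -/
theorem indepModuleComposed_HHDG_free {V : Type*} [Fintype V] (G : SimpleGraph V)
    (hG : G.IndepModuleComposed) :
    (¬ ∃ _f : house ↪g G, True) ∧
    (∀ n, 5 ≤ n → ¬ ∃ _f : SimpleGraph.cycleGraph n ↪g G, True) ∧
    (¬ ∃ _f : domino ↪g G, True) ∧
    (¬ ∃ _f : gem ↪g G, True) := by
  refine ⟨?_, fun n hn => ?_, ?_, ?_⟩ <;> rintro ⟨f, -⟩
  · obtain ⟨x, hx⟩ := hG.exists_nbhdIsIndepModuleOn_compl f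
    exact house_not_nbhdIsIndepModuleOn_compl x hx
  · have : NeZero n := ⟨by omega⟩
    obtain ⟨x, hx⟩ := hG.exists_nbhdIsIndepModuleOn_compl f
    exact SimpleGraph.cycleGraph_not_nbhdIsIndepModuleOn_compl hn x hx
  · obtain ⟨x, hx⟩ := hG.exists_nbhdIsIndepModuleOn_compl f
    exact domino_not_nbhdIsIndepModuleOn_compl x hx
  · obtain ⟨x, hx⟩ := hG.exists_nbhdIsIndepModuleOn_compl f
    exact gem_not_nbhdIsIndepModuleOn_compl x hx
end
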